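/- arXiv:1802.08605 — 2 statements merged into one kernel-verified Lean document; each statement's English description precedes it below -/
import Mathlib

section
/- For every natural number k ≥ 1 and every real λ ∈ (−1,1), the Chebyshev polynomial of the second kind admits the principal value integral representation U_{k-1}(λ) = (τ/π) ∫₀^{π/τ} cos(ωt)/(cos(ωτ) − λ) dω with t = kτ, the integral understood as a Cauchy principal value at the point where cos(ωτ) = λ. -/
/-!
After the substitution `x = τ ω` and `l = cos θ` with `θ ∈ (0, π)`, consider the truncated integrals
`J_m(ε)` of `cos (m x) / (cos x - cos θ)` over `(0, π) \ (θ - ε, θ + ε)`. From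
`cos ((m + 2) x) + cos (m x) = 2 cos x cos ((m + 1) x)` and `cos x = cos θ + (cos x - cos θ)`,
`J_{m+2} = 2 cos θ J_{m+1} - J_m + 2 ∫ cos ((m + 1) x)` and `J_1 = ∫ 1 + cos θ J_0`, where the
remaining integrals are regular and tend to `0` and `π`. So the limits of `J_m / π` obey the
Chebyshev recurrence, provided `J_0 → 0`: the primitive
`(log sin ((x + θ) / 2) - log |sin ((x - θ) / 2)|) / sin θ` of `1 / (cos x - cos θ)` has the same
logarithmic singularity on both sides of `θ`, and these cancel in the principal value.
-/

open Polynomial Real Set Filter MeasureTheory Topology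

theorem tendsto_setIntegral_sdiff_of_tendsto_measure {α E ι : Type*} [MeasurableSpace α]
    [NormedAddCommGroup E] [NormedSpace ℝ E] {μ : Measure α} {f : α → E} {s : Set α}
    {t : ι → Set α} {l : Filter ι} (hf : IntegrableOn f s μ) (ht : ∀ i, MeasurableSet (t i))
    (hμt : Tendsto (μ ∘ t) l (𝓝 0)) :
    Tendsto (fun i => ∫ x in s \ t i, f x ∂μ) l (𝓝 (∫ x in s, f x ∂μ)) := by
  have hsmall : Tendsto (fun i => ∫ x in s ∩ t i, f x ∂μ) l (𝓝 0) := by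
    have hμst : Tendsto ((μ.restrict s) ∘ t) l (𝓝 0) :=
      tendsto_of_tendsto_of_tendsto_of_le_of_le tendsto_const_nhds hμt (fun _ => zero_le)
        fun i => Measure.restrict_le_self (t i)
    simpa only [Measure.restrict_restrict (ht _), inter_comm] using
      hf.tendsto_setIntegral_nhds_zero hμst
  have hsplit : ∀ i, ∫ x in s \ t i, f x ∂μ = (∫ x in s, f x ∂μ) - ∫ x in s ∩ t i, f x ∂μ :=
    fun i => eq_sub_of_add_eq' (integral_inter_add_sdiff (ht i) hf)
  simpa only [hsplit, sub_zero] using tendsto_const_nhds.sub hsmall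

theorem tendsto_volume_Ioo_sub_add (c : ℝ) :
    Tendsto (fun ε => volume (Ioo (c - ε) (c + ε))) (𝓝 0) (𝓝 0) := by
  have h : Tendsto (fun ε : ℝ => ENNReal.ofReal (c + ε - (c - ε))) (𝓝 0)
      (𝓝 (ENNReal.ofReal (c + 0 - (c - 0)))) :=
    ENNReal.tendsto_ofReal (by fun_prop : Continuous fun ε : ℝ => c + ε - (c - ε)).continuousAt
  simpa only [Real.volume_Ioo, add_zero, sub_zero, sub_self, ENNReal.ofReal_zero] using h

theorem tendsto_setIntegral_sdiff_Ioo {E : Type*} [NormedAddCommGroup E] [NormedSpace ℝ E]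
    {f : ℝ → E} {s : Set ℝ} (hf : IntegrableOn f s) (c : ℝ) :
    Tendsto (fun ε => ∫ x in s \ Ioo (c - ε) (c + ε), f x) (𝓝 0) (𝓝 (∫ x in s, f x)) :=
  tendsto_setIntegral_sdiff_of_tendsto_measure hf (fun _ => measurableSet_Ioo)
    (tendsto_volume_Ioo_sub_add c)

theorem integral_cos_nat_mul_Ioo_zero_pi {m : ℕ} (hm : m ≠ 0) :
    ∫ x in Ioo 0 π, cos (m * x) = 0 := by
  rw [← integral_Ioc_eq_integral_Ioo, ← intervalIntegral.integral_of_le pi_pos.le,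
    intervalIntegral.integral_comp_mul_left cos (Nat.cast_ne_zero.2 hm), integral_cos]
  simp [sin_nat_mul_pi]

theorem cos_sub_cos_ne_zero {x θ : ℝ} (hx : x ∈ Icc 0 π) (hθ : θ ∈ Icc 0 π) (hxθ : x ≠ θ) :
    cos x - cos θ ≠ 0 :=
  sub_ne_zero.2 fun h => hxθ (injOn_cos hx hθ h)

theorem cos_sub_cos_ne_zero_of_mem_sdiff {x θ ε : ℝ} (hθ : θ ∈ Icc 0 π) (hε : 0 < ε)
    (hx : x ∈ Icc 0 π \ Ioo (θ - ε) (θ + ε)) : cos x - cos θ ≠ 0 := by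
  refine cos_sub_cos_ne_zero hx.1 hθ ?_
  rintro rfl
  exact hx.2 ⟨by linarith, by linarith⟩

theorem integrableOn_div_cos_sub_cos {g : ℝ → ℝ} (hg : Continuous g) {θ ε : ℝ}
    (hθ : θ ∈ Icc 0 π) (hε : 0 < ε) :
    IntegrableOn (fun x => g x / (cos x - cos θ)) (Ioo 0 π \ Ioo (θ - ε) (θ + ε)) :=
  ContinuousOn.integrableOn_compact (isCompact_Icc.diff isOpen_Ioo)
    (hg.continuousOn.div (by fun_prop) fun _ hx => cos_sub_cos_ne_zero_of_mem_sdiff hθ hε hx)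
    |>.mono_set (sdiff_subset_sdiff_left Ioo_subset_Icc_self)

noncomputable def truncatedChebyshevIntegral (m : ℕ) (θ ε : ℝ) : ℝ :=
  ∫ x in Ioo 0 π \ Ioo (θ - ε) (θ + ε), cos (m * x) / (cos x - cos θ)

-- For `x < θ` the second logarithm is taken of a negative number; `Real.log y = log |y|` makes
-- this the right primitive on both sides of `θ`.
noncomputable def inverseCosSubCosPrimitive (θ x : ℝ) : ℝ :=
  (log (sin ((x + θ) / 2)) - log (sin ((x - θ) / 2))) / sin θ

theorem hasDerivAt_inverseCosSubCosPrimitive {θ x : ℝ} (hθ : sin θ ≠ 0)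
    (hp : sin ((x + θ) / 2) ≠ 0) (hm : sin ((x - θ) / 2) ≠ 0) :
    HasDerivAt (inverseCosSubCosPrimitive θ) (cos x - cos θ)⁻¹ x := by
  have hp' : HasDerivAt (fun y => sin ((y + θ) / 2)) (cos ((x + θ) / 2) * (1 / 2)) x :=
    ((hasDerivAt_id x).add_const θ |>.div_const 2 |>.sin).congr_deriv (by simp)
  have hm' : HasDerivAt (fun y => sin ((y - θ) / 2)) (cos ((x - θ) / 2) * (1 / 2)) x :=
    ((hasDerivAt_id x).sub_const θ |>.div_const 2 |>.sin).congr_deriv (by simp)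
  refine ((hp'.log hp).sub (hm'.log hm)).div_const (sin θ) |>.congr_deriv ?_
  have hθ' : sin θ =
      sin ((x + θ) / 2) * cos ((x - θ) / 2) - cos ((x + θ) / 2) * sin ((x - θ) / 2) := by
    rw [← sin_sub]; ring_nf
  rw [cos_sub_cos]
  field_simp
  rw [hθ'] at hθ ⊢
  field_simp
  ring

theorem integral_inv_cos_sub_cos {θ b c : ℝ} (hθ : θ ∈ Ioo 0 π) (hb : 0 ≤ b) (hbc : b ≤ c)
    (hc : c ≤ π) (hθbc : θ ∉ Icc b c) :
    ∫ x in b..c, (cos x - cos θ)⁻¹ =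
      inverseCosSubCosPrimitive θ c - inverseCosSubCosPrimitive θ b := by
  obtain ⟨hθ0, hθπ⟩ := hθ
  have hne : ∀ x ∈ Icc b c, x ≠ θ := fun x hx h => hθbc (h ▸ hx)
  refine intervalIntegral.integral_eq_sub_of_hasDerivAt (fun x hx => ?_) ?_
  · rw [uIcc_of_le hbc] at hx
    have hx0 : 0 ≤ x := hb.trans hx.1
    have hxπ : x ≤ π := hx.2.trans hc
    refine hasDerivAt_inverseCosSubCosPrimitive (sin_pos_of_pos_of_lt_pi hθ0 hθπ).ne'
      (sin_pos_of_pos_of_lt_pi (by linarith) (by linarith)).ne' ?_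
    rw [Ne, sin_eq_zero_iff_of_lt_of_lt (by linarith) (by linarith)]
    exact fun h => hne x hx (by linarith)
  · refine ContinuousOn.intervalIntegrable ?_
    rw [uIcc_of_le hbc]
    exact (continuousOn_cos.sub continuousOn_const).inv₀ fun x hx =>
      cos_sub_cos_ne_zero ⟨hb.trans hx.1, hx.2.trans hc⟩ ⟨hθ0.le, hθπ.le⟩ (hne x hx)

theorem truncatedChebyshevIntegral_zero_eq {θ ε : ℝ} (hε : 0 < ε) (hθε : ε ≤ θ)
    (hθε' : θ + ε ≤ π) :
    truncatedChebyshevIntegral 0 θ ε =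
      (log (sin (θ - ε / 2)) - log (sin (θ + ε / 2))) / sin θ := by
  have hθ : θ ∈ Ioo 0 π := ⟨by linarith, by linarith⟩
  have hsplit : Ioo 0 π \ Ioo (θ - ε) (θ + ε) = Ioc 0 (θ - ε) ∪ Ico (θ + ε) π := by
    ext x; simp only [Set.mem_sdiff, mem_Ioo, mem_union, mem_Ioc, mem_Ico]; grind
  have hint := integrableOn_div_cos_sub_cos (g := fun _ => 1) continuous_const
    (Ioo_subset_Icc_self hθ) hε
  simp only [one_div, hsplit] at hint
  rw [truncatedChebyshevIntegral]
  simp only [Nat.cast_zero, zero_mul, cos_zero, one_div]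
  rw [hsplit, setIntegral_union (Set.disjoint_left.2 fun x h1 h2 => by linarith [h1.2, h2.1])
      measurableSet_Ico (hint.mono_set subset_union_left) (hint.mono_set subset_union_right),
    integral_Ico_eq_integral_Ioo, ← integral_Ioc_eq_integral_Ioo,
    ← intervalIntegral.integral_of_le (by linarith),
    ← intervalIntegral.integral_of_le (by linarith),
    integral_inv_cos_sub_cos hθ le_rfl (by linarith) (by linarith) (fun h => by linarith [h.2]),
    integral_inv_cos_sub_cos hθ (by linarith) (by linarith) le_rfl (fun h => by linarith [h.1])]
  simp only [inverseCosSubCosPrimitive]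
  -- the singular terms `log (sin (± ε / 2))` cancel
  rw [show (θ - ε - θ) / 2 = -(ε / 2) by ring, show (θ + ε - θ) / 2 = ε / 2 by ring,
    show (0 - θ) / 2 = -((0 + θ) / 2) by ring, show (π + θ) / 2 = π - (π - θ) / 2 by ring,
    show (θ - ε + θ) / 2 = θ - ε / 2 by ring, show (θ + ε + θ) / 2 = θ + ε / 2 by ring,
    sin_neg, sin_neg, sin_pi_sub, log_neg_eq_log, log_neg_eq_log]
  ring

theorem tendsto_truncatedChebyshevIntegral_zero {θ : ℝ} (hθ : θ ∈ Ioo 0 π) :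
    Tendsto (truncatedChebyshevIntegral 0 θ) (𝓝[>] 0) (𝓝 0) := by
  have hsin : sin θ ≠ 0 := (sin_pos_of_pos_of_lt_pi hθ.1 hθ.2).ne'
  have hcont : ContinuousAt
      (fun ε => (log (sin (θ - ε / 2)) - log (sin (θ + ε / 2))) / sin θ) 0 := by
    fun_prop (disch := simp [hsin])
  have hsmall : Ioo 0 (min θ (π - θ)) ∈ 𝓝[>] (0 : ℝ) :=
    Ioo_mem_nhdsGT (lt_min hθ.1 (by linarith [hθ.2]))
  have hlim := hcont.tendsto.mono_left (nhdsWithin_le_nhds (s := Ioi 0))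
  simp only [zero_div, sub_zero, add_zero, sub_self] at hlim
  refine hlim.congr' ?_
  filter_upwards [hsmall] with ε hε
  exact (truncatedChebyshevIntegral_zero_eq hε.1 (hε.2.le.trans (min_le_left _ _))
    (by linarith [hε.2.le.trans (min_le_right _ _)])).symm

theorem truncatedChebyshevIntegral_one {θ ε : ℝ} (hθ : θ ∈ Icc 0 π) (hε : 0 < ε) :
    truncatedChebyshevIntegral 1 θ ε =
      (∫ _ in Ioo 0 π \ Ioo (θ - ε) (θ + ε), (1 : ℝ)) +
        cos θ * truncatedChebyshevIntegral 0 θ ε := by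
  have h1 : IntegrableOn (fun _ => (1 : ℝ)) (Ioo 0 π \ Ioo (θ - ε) (θ + ε)) :=
    integrableOn_const ((measure_mono sdiff_subset).trans_lt measure_Ioo_lt_top).ne
  have h0 := integrableOn_div_cos_sub_cos (g := fun x => cos ((0 : ℕ) * x)) (by fun_prop) hθ hε
  have hpt : EqOn (fun x => cos ((1 : ℕ) * x) / (cos x - cos θ))
      (fun x => 1 + cos θ * (cos ((0 : ℕ) * x) / (cos x - cos θ)))
      (Ioo 0 π \ Ioo (θ - ε) (θ + ε)) :=
    fun x hx => by
      field_simp [cos_sub_cos_ne_zero_of_mem_sdiff hθ hε ⟨Ioo_subset_Icc_self hx.1, hx.2⟩]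
      simp
  rw [truncatedChebyshevIntegral,
    setIntegral_congr_fun (measurableSet_Ioo.diff measurableSet_Ioo) hpt,
    integral_add h1 (h0.const_mul _), integral_const_mul, truncatedChebyshevIntegral]

theorem truncatedChebyshevIntegral_add_two (m : ℕ) {θ ε : ℝ} (hθ : θ ∈ Icc 0 π) (hε : 0 < ε) :
    truncatedChebyshevIntegral (m + 2) θ ε =
      2 * cos θ * truncatedChebyshevIntegral (m + 1) θ ε
        + 2 * (∫ x in Ioo 0 π \ Ioo (θ - ε) (θ + ε), cos ((m + 1 : ℕ) * x))
        - truncatedChebyshevIntegral m θ ε := by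
  have hcos : ∀ n : ℕ, Continuous fun x : ℝ => cos (n * x) := fun n => by fun_prop
  have hm1 := integrableOn_div_cos_sub_cos (hcos (m + 1)) hθ hε
  have hm := integrableOn_div_cos_sub_cos (hcos m) hθ hε
  have hc : IntegrableOn (fun x : ℝ => cos ((m + 1 : ℕ) * x)) (Ioo 0 π \ Ioo (θ - ε) (θ + ε)) :=
    (hcos (m + 1)).integrableOn_Icc.mono_set (sdiff_subset.trans Ioo_subset_Icc_self)
  have hpt : EqOn (fun x => cos ((m + 2 : ℕ) * x) / (cos x - cos θ))
      (fun x => 2 * cos θ * (cos ((m + 1 : ℕ) * x) / (cos x - cos θ))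
        + 2 * cos ((m + 1 : ℕ) * x) - cos (m * x) / (cos x - cos θ))
      (Ioo 0 π \ Ioo (θ - ε) (θ + ε)) := fun x hx => by
    have hsum : cos ((m + 2 : ℕ) * x) = 2 * cos x * cos ((m + 1 : ℕ) * x) - cos (m * x) := by
      have h := cos_add_cos ((m + 2 : ℕ) * x) (m * x)
      push_cast at h ⊢
      rw [show ((m + 2) * x + m * x) / 2 = (m + 1) * x by ring,
        show ((m + 2) * x - m * x) / 2 = x by ring] at h
      linarith
    simp only
    rw [hsum]
    field_simp [cos_sub_cos_ne_zero_of_mem_sdiff hθ hε ⟨Ioo_subset_Icc_self hx.1, hx.2⟩]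
    ring
  rw [truncatedChebyshevIntegral,
    setIntegral_congr_fun (measurableSet_Ioo.diff measurableSet_Ioo) hpt,
    integral_sub (f := fun x => 2 * cos θ * (cos ((m + 1 : ℕ) * x) / (cos x - cos θ))
      + 2 * cos ((m + 1 : ℕ) * x)) ((hm1.const_mul _).add (hc.const_mul _)) hm,
    integral_add (hm1.const_mul _) (hc.const_mul _), integral_const_mul, integral_const_mul]
  rfl

theorem tendsto_truncatedChebyshevIntegral {θ : ℝ} (hθ : θ ∈ Ioo 0 π) (m : ℕ) :
    Tendsto (truncatedChebyshevIntegral m θ) (𝓝[>] 0)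
      (𝓝 (π * (Chebyshev.U ℝ ((m : ℤ) - 1)).eval (cos θ))) := by
  have hθ' : θ ∈ Icc 0 π := Ioo_subset_Icc_self hθ
  have hlim : ∀ {f : ℝ → ℝ}, IntegrableOn f (Ioo 0 π) → Tendsto
      (fun ε => ∫ x in Ioo 0 π \ Ioo (θ - ε) (θ + ε), f x) (𝓝[>] 0) (𝓝 (∫ x in Ioo 0 π, f x)) :=
    fun hf => (tendsto_setIntegral_sdiff_Ioo hf θ).mono_left nhdsWithin_le_nhds
  induction m using Nat.twoStepInduction with
  | zero => simpa using tendsto_truncatedChebyshevIntegral_zero hθ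
  | one =>
    have h := (hlim (integrableOn_const (C := (1 : ℝ)) measure_Ioo_lt_top.ne)).add
      ((tendsto_truncatedChebyshevIntegral_zero hθ).const_mul (cos θ))
    have hπ : ∫ _ in Ioo 0 π, (1 : ℝ) = π := by simp [pi_pos.le]
    rw [hπ, mul_zero, add_zero] at h
    simp only [Nat.cast_one, sub_self, Chebyshev.U_zero, eval_one, mul_one]
    refine h.congr' ?_
    filter_upwards [self_mem_nhdsWithin] with ε hε
    exact (truncatedChebyshevIntegral_one hθ' hε).symm
  | more n ih₀ ih₁ =>
    have hcos := hlim (f := fun x => cos ((n + 1 : ℕ) * x))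
      ((by fun_prop : Continuous fun x : ℝ => cos ((n + 1 : ℕ) * x)).integrableOn_Icc.mono_set
        Ioo_subset_Icc_self)
    rw [integral_cos_nat_mul_Ioo_zero_pi (Nat.succ_ne_zero n)] at hcos
    have h := ((ih₁.const_mul (2 * cos θ)).add (hcos.const_mul 2)).sub ih₀
    rw [show ((n + 2 : ℕ) : ℤ) - 1 = ((n : ℤ) - 1) + 2 by push_cast; ring, Chebyshev.U_add_two,
      show ((n : ℤ) - 1) + 1 = ((n + 1 : ℕ) : ℤ) - 1 by push_cast; ring]
    simp only [eval_sub, eval_mul, eval_ofNat, eval_X]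
    convert h.congr' ?_ using 2
    · ring
    filter_upwards [self_mem_nhdsWithin] with ε hε
    exact (truncatedChebyshevIntegral_add_two n hθ' hε).symm

theorem setIntegral_rescaled_eq_truncatedChebyshevIntegral {τ : ℝ} (hτ : 0 < τ) (k : ℕ)
    (θ ε : ℝ) :
    ∫ ω in Ioo 0 (π / τ) \ Ioo (θ / τ - ε) (θ / τ + ε),
        cos (ω * (k * τ)) / (cos (ω * τ) - cos θ) =
      τ⁻¹ * truncatedChebyshevIntegral k θ (τ * ε) := by
  have h := Measure.setIntegral_comp_smul_of_pos (μ := volume)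
    (fun x => cos (k * x) / (cos x - cos θ)) (Ioo 0 (π / τ) \ Ioo (θ / τ - ε) (θ / τ + ε)) hτ
  rw [Set.smul_set_sdiff₀ hτ.ne', LinearOrderedField.smul_Ioo hτ, LinearOrderedField.smul_Ioo hτ,
    Module.finrank_self, pow_one, smul_eq_mul, mul_zero, mul_div_cancel₀ _ hτ.ne', mul_sub,
    mul_add, mul_div_cancel₀ _ hτ.ne'] at h
  rw [truncatedChebyshevIntegral, ← h]
  congr 1 with ω
  simp only [smul_eq_mul]
  ring_nf

theorem chebyshev_U_principal_value_integral_general (τ : ℝ) (hτ : 0 < τ) (k : ℕ)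
    (l : ℝ) (hl : l ∈ Set.Ioo (-1 : ℝ) 1) :
    Filter.Tendsto
      (fun ε : ℝ =>
        (τ / Real.pi) *
          ∫ ω in Set.Ioo (0 : ℝ) (Real.pi / τ) \
              Set.Ioo (Real.arccos l / τ - ε) (Real.arccos l / τ + ε),
            Real.cos (ω * (k * τ)) / (Real.cos (ω * τ) - l))
      (nhdsWithin 0 (Set.Ioi 0))
      (nhds ((Polynomial.Chebyshev.U ℝ ((k : ℤ) - 1)).eval l)) := by
  obtain ⟨θ, hθ, rfl⟩ : ∃ θ ∈ Ioo 0 π, cos θ = l :=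
    ⟨arccos l, ⟨arccos_pos.2 hl.2, arccos_lt_pi.2 hl.1⟩, cos_arccos hl.1.le hl.2.le⟩
  rw [arccos_cos hθ.1.le hθ.2.le]
  simp_rw [setIntegral_rescaled_eq_truncatedChebyshevIntegral hτ]
  have hscale : Tendsto (fun ε => τ * ε) (𝓝[>] 0) (𝓝[>] 0) := by
    simpa using TendstoNhdsWithinIoi.const_mul hτ (tendsto_id (x := 𝓝[>] (0 : ℝ)))
  have h := ((tendsto_truncatedChebyshevIntegral hθ k).comp hscale).div_const π
  convert h using 2 with ε
  · simp only [Function.comp]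
    field_simp
  · field_simp

/-- Cauchy principal value representation of Chebyshev `U`:
`U_{k−1}(λ) = (τ/π) PV ∫₀^{π/τ} cos(ωt)/(cos(ωτ) − λ) dω` with `t = kτ`,
the principal value being taken at the point where `cos(ωτ) = λ`. -/
theorem chebyshev_U_principal_value_integral (τ : ℝ) (hτ : 0 < τ) (k : ℕ) (hk : 1 ≤ k)
    (l : ℝ) (hl : l ∈ Set.Ioo (-1 : ℝ) 1) :
    Filter.Tendsto
      (fun ε : ℝ =>
        (τ / Real.pi) *
          ∫ ω in Set.Ioo (0 : ℝ) (Real.pi / τ) \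
              Set.Ioo (Real.arccos l / τ - ε) (Real.arccos l / τ + ε),
            Real.cos (ω * (k * τ)) / (Real.cos (ω * τ) - l))
      (nhdsWithin 0 (Set.Ioi 0))
      (nhds ((Polynomial.Chebyshev.U ℝ ((k : ℤ) - 1)).eval l)) :=
  chebyshev_U_principal_value_integral_general τ hτ k l hl
end

section
/- Let a > 0 and let f : ℝ → ℂ be the function f(ω) = 1/(cos(ωτ) − λ) for fixed τ > 0 and λ > 1. Then for t = kτ with k ∈ ℕ, the integral (τ/2π)∫_{−π/τ}^{π/τ} e^{−iωt}/(cos(ωτ) − λ) dω equals −U_{k−1}(λ̂) evaluated by analytic continuation, and in particular for λ > 1 the integral equals −(λ − √(λ²−1))^k / √(λ²−1). -/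
/-!
Put `z = e^{iθ}` and `r = λ - √(λ² - 1) ∈ (0, 1)`, so that `2z (cos θ - λ) = (z - r)(z - r⁻¹)`.
After `θ ↦ -θ`, the integral over one period is the contour integral
`(2/i) ∮_{|z|=1} z^k / ((z - r)(z - r⁻¹)) dz`, and the Cauchy integral formula evaluates it as
`4π r^k / (r - r⁻¹) = -2π r^k / √(λ² - 1)`. The substitution `θ = ωτ` reduces the stated integral
to this one.
-/

open Complex Real intervalIntegral Metric

theorem circleIntegral_eq_integral_neg_pi_pi {E : Type*} [NormedAddCommGroup E]
    [NormedSpace ℂ E] (f : ℂ → E) (c : ℂ) (R : ℝ) :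
    (∮ z in C(c, R), f z) = ∫ θ in -π..π, deriv (circleMap c R) θ • f (circleMap c R θ) := by
  have hper : Function.Periodic
      (fun θ => deriv (circleMap c R) θ • f (circleMap c R θ)) (2 * π) := fun θ => by
    simp only [deriv_circleMap, periodic_circleMap _ _ θ]
  simpa [circleIntegral, show -π + 2 * π = π by ring] using hper.intervalIntegral_add_eq 0 (-π)

theorem two_mul_circleMap_mul_cos_sub (θ : ℝ) {a b c : ℂ} (hab : a * b = 1)
    (hc : a + b = 2 * c) :
    2 * circleMap 0 1 θ * (Real.cos θ - c) = (circleMap 0 1 θ - a) * (circleMap 0 1 θ - b) := by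
  have hcos : 2 * circleMap 0 1 θ * Real.cos θ = circleMap 0 1 θ ^ 2 + 1 := by
    rw [circleMap_zero, ofReal_cos, Complex.cos, ofReal_one, one_mul, neg_mul, Complex.exp_neg]
    field_simp [Complex.exp_ne_zero]
  linear_combination hcos + circleMap 0 1 θ * hc - hab

theorem circleIntegral_pow_div_sub_mul_sub (k : ℕ) {c a b : ℂ} {R : ℝ} (ha : a ∈ ball c R)
    (hb : b ∉ closedBall c R) :
    (∮ z in C(c, R), z ^ k / ((z - a) * (z - b))) = 2 * π * I * (a ^ k / (a - b)) := by
  have hd : DifferentiableOn ℂ (fun z => z ^ k / (z - b)) (closedBall c R) :=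
    (differentiableOn_pow k).div (differentiableOn_id.sub_const b)
      fun z hz => sub_ne_zero.2 (ne_of_mem_of_not_mem hz hb)
  have hsplit :
      (fun z => z ^ k / ((z - a) * (z - b))) = fun z => (z - a)⁻¹ • (z ^ k / (z - b)) := by
    funext z; rw [smul_eq_mul, div_eq_mul_inv, div_eq_mul_inv, mul_inv]; ring
  rw [hsplit, hd.circleIntegral_sub_inv_smul ha, smul_eq_mul]

theorem cos_sub_ne_zero {l : ℝ} (hl : 1 < l) (θ : ℝ) : (Real.cos θ : ℂ) - l ≠ 0 := by
  rw [← ofReal_sub, ofReal_ne_zero]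
  linarith [Real.cos_le_one θ]

theorem integral_exp_div_cos_sub {l : ℝ} (hl : 1 < l) (k : ℕ) :
    ∫ θ in -π..π, exp (-I * θ * k) / ((Real.cos θ : ℂ) - l)
      = -(2 * π * ((l - √(l ^ 2 - 1) : ℝ) : ℂ) ^ k / (√(l ^ 2 - 1) : ℝ)) := by
  set s := √(l ^ 2 - 1)
  have hs : 0 < s := Real.sqrt_pos.2 (by nlinarith)
  have hs2 : s ^ 2 = l ^ 2 - 1 := Real.sq_sqrt (by nlinarith)
  have hr0 : 0 < l - s := by nlinarith
  have hr1 : l - s < 1 := by nlinarith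
  have hinside : ((l - s : ℝ) : ℂ) ∈ ball 0 1 := by
    rw [mem_ball_zero_iff, norm_real, Real.norm_of_nonneg hr0.le]; exact hr1
  have houtside : ((l + s : ℝ) : ℂ) ∉ closedBall 0 1 := by
    rw [mem_closedBall_zero_iff, norm_real, Real.norm_of_nonneg (by positivity)]; linarith
  have hab : (l - s) * (l + s) = 1 := by linear_combination -hs2
  have hroots (θ : ℝ) := two_mul_circleMap_mul_cos_sub θ (a := ((l - s : ℝ) : ℂ))
    (b := ((l + s : ℝ) : ℂ)) (c := l) (by rw [← ofReal_mul, hab, ofReal_one]) (by push_cast; ring)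
  calc ∫ θ in -π..π, exp (-I * θ * k) / ((Real.cos θ : ℂ) - l)
      = ∫ θ in -π..π, exp (I * θ * k) / ((Real.cos θ : ℂ) - l) := by
        simpa [Real.cos_neg] using integral_comp_neg (a := -π) (b := π)
          fun θ : ℝ => exp (I * θ * k) / ((Real.cos θ : ℂ) - l)
    _ = ∫ θ in -π..π, 2 / I * (deriv (circleMap 0 1) θ • (circleMap 0 1 θ ^ k /
          ((circleMap 0 1 θ - (l - s : ℝ)) * (circleMap 0 1 θ - (l + s : ℝ))))) := by
        refine integral_congr fun θ _ => ?_
        have hz : circleMap 0 1 θ ≠ 0 := circleMap_ne_center one_ne_zero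
        rw [deriv_circleMap, smul_eq_mul, ← hroots θ, circleMap_zero, ofReal_one, one_mul,
          ← Complex.exp_nat_mul]
        field_simp [cos_sub_ne_zero hl θ, hz]
    _ = _ := by
        have hcauchy := circleIntegral_pow_div_sub_mul_sub k hinside houtside
        rw [circleIntegral_eq_integral_neg_pi_pi] at hcauchy
        rw [integral_const_mul, hcauchy]
        have hs' : (s : ℂ) ≠ 0 := ofReal_ne_zero.2 hs.ne'
        rw [show ((l - s : ℝ) : ℂ) - ((l + s : ℝ) : ℂ) = -2 * s by push_cast; ring]
        field_simp [I_ne_zero]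

theorem chebyshev_U_integral_analytic_continuation_general (τ l : ℝ) (hτ : 0 < τ) (hl : 1 < l)
    (k : ℕ) :
    (τ / (2 * Real.pi) : ℂ) *
        ∫ ω in (-(Real.pi / τ))..(Real.pi / τ),
          Complex.exp (-Complex.I * ω * (k * τ)) / ((Real.cos (ω * τ) : ℂ) - (l : ℂ))
      = -(((l - Real.sqrt (l ^ 2 - 1) : ℝ) : ℂ) ^ k / ((Real.sqrt (l ^ 2 - 1) : ℝ) : ℂ)) := by
  set g := fun θ : ℝ => exp (-I * θ * k) / ((Real.cos θ : ℂ) - l)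
  have hrescale : (fun ω : ℝ => exp (-I * ω * (k * τ)) / ((Real.cos (ω * τ) : ℂ) - l))
      = fun ω => g (ω * τ) := by
    funext ω
    simp only [g]
    push_cast
    ring_nf
  rw [hrescale, integral_comp_mul_right g hτ.ne', neg_mul, div_mul_cancel₀ _ hτ.ne',
    integral_exp_div_cos_sub hl k, real_smul]
  have hτ' : (τ : ℂ) ≠ 0 := ofReal_ne_zero.2 hτ.ne'
  push_cast
  field_simp

/-- for `τ > 0`, `λ > 1` and `t = kτ` with `k ≥ 1`, the contour-free integral
`(τ/2π) ∫_{−π/τ}^{π/τ} e^{−iωt}/(cos(ωτ) − λ) dω` equals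
`−(λ − √(λ²−1))^k / √(λ²−1)`. -/
theorem chebyshev_U_integral_analytic_continuation (τ l : ℝ) (hτ : 0 < τ) (hl : 1 < l)
    (k : ℕ) (hk : 1 ≤ k) :
    (τ / (2 * Real.pi) : ℂ) *
        ∫ ω in (-(Real.pi / τ))..(Real.pi / τ),
          Complex.exp (-Complex.I * ω * (k * τ)) / ((Real.cos (ω * τ) : ℂ) - (l : ℂ))
      = -(((l - Real.sqrt (l ^ 2 - 1) : ℝ) : ℂ) ^ k / ((Real.sqrt (l ^ 2 - 1) : ℝ) : ℂ)) :=
  chebyshev_U_integral_analytic_continuation_general τ l hτ hl k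
end
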